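/- Let R be a Noetherian commutative ring of prime characteristic p > 0 and I an ideal. Then there exists an integer e_0 ≥ 0 such that (I^F)^{[p^e]} = I^{[p^e]} for all e ≥ e_0. -/
import Mathlib


def frobPow {R : Type*} [CommRing R] (I : Ideal R) (q : ℕ) : Ideal R :=
  Ideal.span ((fun r => r ^ q) '' (I : Set R))

def frobClosureSet {R : Type*} [CommRing R] (p : ℕ) (I : Ideal R) : Set R :=
  {x | ∃ e : ℕ, x ^ p ^ e ∈ frobPow I (p ^ e)}

section Aux

variable {R : Type*} [CommRing R] (p : ℕ) [hpp : Fact p.Prime] [CharP R p] (I : Ideal R)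

lemma frobPow_eq_map (e : ℕ) :
    frobPow I (p ^ e) = Ideal.map (iterateFrobenius R p e) I := by
  haveI : ExpChar R p := .prime hpp.out
  unfold frobPow Ideal.map
  congr 1

lemma frob_mem_mono {x : R} {e k : ℕ} (h : x ^ p ^ e ∈ frobPow I (p ^ e)) :
    x ^ p ^ (e + k) ∈ frobPow I (p ^ (e + k)) := by
  haveI : ExpChar R p := .prime hpp.out
  rw [frobPow_eq_map] at h ⊢
  have hx : x ^ p ^ (e + k) = iterateFrobenius R p k (x ^ p ^ e) := by
    rw [iterateFrobenius_def, ← pow_mul, ← pow_add]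
  have hcomp : Ideal.map (iterateFrobenius R p (e + k)) I
      = Ideal.map (iterateFrobenius R p k) (Ideal.map (iterateFrobenius R p e) I) := by
    rw [Ideal.map_map]
    congr 1
    ext x
    simp only [RingHom.coe_comp, Function.comp_apply, iterateFrobenius_def,
      ← pow_mul, ← pow_add]
  rw [hx, hcomp]
  exact Ideal.mem_map_of_mem _ h

def frobClosureIdeal : Ideal R where
  carrier := frobClosureSet p I
  zero_mem' := ⟨0, by simpa using (frobPow I (p ^ 0)).zero_mem⟩
  add_mem' := by
    haveI : ExpChar R p := .prime hpp.out
    rintro x y ⟨e₁, hx⟩ ⟨e₂, hy⟩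
    refine ⟨e₁ + e₂, ?_⟩
    rw [add_pow_char_pow]
    exact add_mem (frob_mem_mono p I hx)
      (by rw [add_comm]; exact frob_mem_mono p I hy)
  smul_mem' := by
    rintro r x ⟨e, hx⟩
    exact ⟨e, by rw [smul_eq_mul, mul_pow]; exact Ideal.mul_mem_left _ _ hx⟩

end Aux

theorem exists_uniform_frobenius_power_eq {R : Type*} [CommRing R] [IsNoetherianRing R]
    (p : ℕ) (hp : p.Prime) [CharP R p] (I : Ideal R) :
    ∃ e₀ : ℕ, ∀ e ≥ e₀,
      Ideal.span ((fun r => r ^ p ^ e) '' frobClosureSet p I) = frobPow I (p ^ e) := by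
  haveI : Fact p.Prime := ⟨hp⟩
  haveI : ExpChar R p := .prime hp
  classical
  obtain ⟨s, hs⟩ := IsNoetherian.noetherian (frobClosureIdeal p I)
  set E : R → ℕ := fun x => if h : x ∈ frobClosureSet p I then h.choose else 0 with hE
  have hEspec : ∀ x (h : x ∈ frobClosureSet p I),
      x ^ p ^ E x ∈ frobPow I (p ^ E x) := by
    intro x h
    simp only [hE, dif_pos h]
    exact h.choose_spec
  refine ⟨s.sup E, fun e he => ?_⟩
  have hspan : Ideal.span ((fun r => r ^ p ^ e) '' frobClosureSet p I)
      = Ideal.map (iterateFrobenius R p e) (frobClosureIdeal p I) := by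
    unfold Ideal.map
    congr 1
  apply le_antisymm
  · rw [hspan, ← hs, Ideal.map_le_iff_le_comap, Submodule.span_le]
    intro x hxs
    have hxJ : x ∈ frobClosureSet p I := by
      have h2 : x ∈ frobClosureIdeal p I := by
        rw [← hs]; exact Ideal.subset_span hxs
      exact h2
    have hle : E x ≤ e := le_trans (Finset.le_sup hxs) he
    have := frob_mem_mono p I (k := e - E x) (hEspec x hxJ)
    rw [Nat.add_sub_cancel' hle] at this
    simpa [iterateFrobenius_def] using this
  · unfold frobPow
    apply Ideal.span_mono
    apply Set.image_mono
    intro x hx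
    exact ⟨0, Ideal.subset_span ⟨x, hx, rfl⟩⟩
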